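/- Let ν > 0, p ≥ 2 and 1/p + 1/q = 1. Let g : [0,∞) × ℝ → H be measurable (time-independent) and suppose there are ḡ ∈ L^p_ν and ĝ ∈ L^p_ν ∩ L^∞([0,∞)) with ‖g(x,u)‖_H ≤ |ḡ(x)| and ‖g(x,u) − g(x,v)‖_H ≤ |ĝ(x)| |u−v| for all x ∈ [0,∞) and u, v ∈ ℝ. Define F(f)(x) = ⟨ g(x,f(x)), ∫_0^x g(y,f(y)) dy ⟩_H. Then for all measurable f₁, f₂ ∈ L^p_ν, ∫_0^∞ (F(f₁)(x) − F(f₂)(x)) (f₁(x) − f₂(x)) |f₁(x) − f₂(x)|^{p−2} e^{νx} dx ≤ 2 (p/(νq))^{1/q} ‖ĝ‖_{L^∞} ‖ḡ‖_{ν,p} ‖f₁ − f₂‖^p_{ν,p}. Equivalently, the semi-inner product satisfies [F(f₁) − F(f₂), f₁ − f₂] ≤ 2 (p/(νq))^{1/q} ‖ĝ‖_{L^∞} ‖ḡ‖_{ν,p} ‖f₁ − f₂‖²_{ν,p}. -/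

import Mathlib

/-!
Write `G f x = ∫_0^x g(y, f y) dy` and `δ = f₁ - f₂`. Then
`F f₁ x - F f₂ x = ⟪g(x, f₁ x) - g(x, f₂ x), G f₁ x⟫ + ⟪g(x, f₂ x), G f₁ x - G f₂ x⟫`.
Hölder against the weight `e^{-νy/p}` gives `∫_0^x |h| ≤ (p/(νq))^{1/q} ‖h‖_{ν,p}` uniformly in `x`,
so `|F f₁ x - F f₂ x| ≤ C ‖ĝ‖_∞ (‖ḡ‖_{ν,p} |δ x| + ‖δ‖_{ν,p} |ḡ x|)` with `C = (p/(νq))^{1/q}`.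
Against `δ |δ|^{p-2} e^{νx}` the first term integrates to `C ‖ĝ‖_∞ ‖ḡ‖ ‖δ‖^p`, and by Hölder
once more, `∫ |ḡ| |δ|^{p-1} e^{νx} ≤ ‖ḡ‖ ‖δ‖^{p-1}`, so the second term has the same bound.
-/

open MeasureTheory Set Real

/-- The `L^p_ν` norm `‖f‖_{ν,p} = (∫_0^∞ |f(x)|^p e^{νx} dx)^{1/p}`. -/
noncomputable def lpNu (ν p : ℝ) (f : ℝ → ℝ) : ℝ :=
  (∫ x in Ioi (0 : ℝ), |f x| ^ p * Real.exp (ν * x)) ^ (1 / p)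

/-- The time-independent HJMM drift:
`F(f)(x) = ⟨ g(x,f(x)), ∫_0^x g(y,f(y)) dy ⟩_H`. -/
noncomputable def hjmDrift₀ {H : Type*} [NormedAddCommGroup H] [InnerProductSpace ℝ H]
    (g : ℝ → ℝ → H) (f : ℝ → ℝ) (x : ℝ) : ℝ :=
  @inner ℝ H _ (g x (f x)) (∫ y in Ioc (0 : ℝ) x, g y (f y))

lemma ae_abs_le_eLpNormEssSup_toReal {α : Type*} [MeasurableSpace α] {μ : Measure α}
    {f : α → ℝ} (hf : eLpNormEssSup f μ ≠ ⊤) : ∀ᵐ x ∂μ, |f x| ≤ (eLpNormEssSup f μ).toReal :=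
  (ae_le_eLpNormEssSup (f := f)).mono fun x hx => by
    simpa using ENNReal.toReal_mono hf hx

section Weighted

variable {ν p q : ℝ}

lemma lpNu_nonneg (f : ℝ → ℝ) : 0 ≤ lpNu ν p f :=
  rpow_nonneg (integral_nonneg fun _ => by positivity) _

lemma lpNu_rpow (hp : p ≠ 0) (f : ℝ → ℝ) :
    lpNu ν p f ^ p = ∫ x in Ioi (0 : ℝ), |f x| ^ p * exp (ν * x) := by
  rw [lpNu, ← rpow_mul (integral_nonneg fun _ => by positivity), one_div_mul_cancel hp, rpow_one]

lemma mul_exp_div_rpow {t : ℝ} (ht : 0 ≤ t) (hp : p ≠ 0) (x : ℝ) :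
    (t * exp (ν * x / p)) ^ p = t ^ p * exp (ν * x) := by
  rw [mul_rpow ht (exp_nonneg _), ← exp_mul, div_mul_cancel₀ _ hp]

lemma memLp_mul_exp_iff {s : Set ℝ} (hp : 0 < p) {f : ℝ → ℝ}
    (hf : AEStronglyMeasurable f (volume.restrict s)) :
    MemLp (fun x => f x * exp (ν * x / p)) (ENNReal.ofReal p) (volume.restrict s) ↔
      IntegrableOn (fun x => |f x| ^ p * exp (ν * x)) s := by
  rw [← integrable_norm_rpow_iff (f := fun x => f x * exp (ν * x / p)) (hf.mul (by fun_prop))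
    (by simpa using hp) ENNReal.ofReal_ne_top, ENNReal.toReal_ofReal hp.le]
  simp only [norm_mul, norm_eq_abs, abs_exp, mul_exp_div_rpow (abs_nonneg _) hp.ne']
  exact Iff.rfl

lemma IntegrableOn.abs_sub_rpow_mul_exp (hp : 0 < p) {f₁ f₂ : ℝ → ℝ}
    (hf₁m : AEStronglyMeasurable f₁ (volume.restrict (Ioi 0)))
    (hf₂m : AEStronglyMeasurable f₂ (volume.restrict (Ioi 0)))
    (hf₁ : IntegrableOn (fun x => |f₁ x| ^ p * exp (ν * x)) (Ioi 0))
    (hf₂ : IntegrableOn (fun x => |f₂ x| ^ p * exp (ν * x)) (Ioi 0)) :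
    IntegrableOn (fun x => |f₁ x - f₂ x| ^ p * exp (ν * x)) (Ioi 0) := by
  rw [← memLp_mul_exp_iff (f := fun x => f₁ x - f₂ x) hp (hf₁m.sub hf₂m)]
  simp_rw [sub_mul]
  exact ((memLp_mul_exp_iff hp hf₁m).2 hf₁).sub ((memLp_mul_exp_iff hp hf₂m).2 hf₂)

lemma integral_Ioc_abs_le_lpNu (hν : 0 < ν) (hpq : p.HolderConjugate q) {h : ℝ → ℝ}
    (hm : AEStronglyMeasurable h (volume.restrict (Ioi 0)))
    (hint : IntegrableOn (fun y => |h y| ^ p * exp (ν * y)) (Ioi 0)) (x : ℝ) :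
    IntegrableOn (fun y => |h y|) (Ioc 0 x) ∧
      ∫ y in Ioc 0 x, |h y| ≤ (p / (ν * q)) ^ (1 / q) * lpNu ν p h := by
  have hp := hpq.pos
  have hq := hpq.symm.pos
  have hc : -(ν * q / p) < 0 := by linarith [show 0 < ν * q / p by positivity]
  have hbq : ∀ y, exp (-(ν * y / p)) ^ q = exp (-(ν * q / p) * y) := fun y => by
    rw [← exp_mul]; ring_nf
  have hmx : AEStronglyMeasurable h (volume.restrict (Ioc 0 x)) :=
    hm.mono_measure (Measure.restrict_mono Ioc_subset_Ioi_self le_rfl)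
  have ha : MemLp (fun y => |h y| * exp (ν * y / p)) (ENNReal.ofReal p)
      (volume.restrict (Ioc 0 x)) :=
    (memLp_mul_exp_iff (f := fun y => |h y|) hp (continuous_abs.comp_aestronglyMeasurable hmx)).2
      (by simpa only [abs_abs] using hint.mono_set Ioc_subset_Ioi_self)
  have hb : MemLp (fun y => exp (-(ν * y / p))) (ENNReal.ofReal q) (volume.restrict (Ioc 0 x)) := by
    rw [← integrable_norm_rpow_iff (by fun_prop) (by simpa using hq) ENNReal.ofReal_ne_top,
      ENNReal.toReal_ofReal hq.le]
    simp only [norm_eq_abs, abs_exp, hbq]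
    exact (integrableOn_exp_mul_Ioi hc 0).mono_set Ioc_subset_Ioi_self
  have hab : ∀ y, |h y| * exp (ν * y / p) * exp (-(ν * y / p)) = |h y| := fun y => by
    rw [mul_assoc, ← exp_add, add_neg_cancel, exp_zero, mul_one]
  have := hpq.ennrealOfReal
  have hHolder := integral_mul_le_Lp_mul_Lq_of_nonneg hpq
    (ae_of_all _ fun y => by positivity) (ae_of_all _ fun y => by positivity) ha hb
  simp only [hab, mul_exp_div_rpow (abs_nonneg _) hp.ne', hbq] at hHolder
  refine ⟨(ha.integrable_mul hb).congr (ae_of_all _ hab), hHolder.trans ?_⟩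
  rw [mul_comm ((p / (ν * q)) ^ (1 / q)), lpNu]
  gcongr ?_ ^ _ * ?_ ^ _
  · exact setIntegral_mono_set hint (ae_of_all _ fun y => by positivity)
      Ioc_subset_Ioi_self.eventuallyLE
  · calc ∫ y in Ioc 0 x, exp (-(ν * q / p) * y)
        ≤ ∫ y in Ioi 0, exp (-(ν * q / p) * y) :=
          setIntegral_mono_set (integrableOn_exp_mul_Ioi hc 0) (ae_of_all _ fun y => by positivity)
            Ioc_subset_Ioi_self.eventuallyLE
      _ = p / (ν * q) := by
          rw [integral_exp_mul_Ioi hc, mul_zero, exp_zero]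
          field_simp

lemma integral_abs_mul_abs_rpow_mul_exp_le (hpq : p.HolderConjugate q) {u v : ℝ → ℝ}
    (hu : AEStronglyMeasurable u (volume.restrict (Ioi 0)))
    (hv : AEStronglyMeasurable v (volume.restrict (Ioi 0)))
    (hui : IntegrableOn (fun x => |u x| ^ p * exp (ν * x)) (Ioi 0))
    (hvi : IntegrableOn (fun x => |v x| ^ p * exp (ν * x)) (Ioi 0)) :
    IntegrableOn (fun x => |u x| * |v x| ^ (p - 1) * exp (ν * x)) (Ioi 0) ∧
      ∫ x in Ioi 0, |u x| * |v x| ^ (p - 1) * exp (ν * x) ≤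
        lpNu ν p u * lpNu ν p v ^ (p - 1) := by
  have hp := hpq.pos
  have hvq : ∀ x, (|v x| ^ (p - 1)) ^ q = |v x| ^ p := fun x => by
    rw [← rpow_mul (abs_nonneg _), hpq.sub_one_mul_conj]
  have ha : MemLp (fun x => |u x| * exp (ν * x / p)) (ENNReal.ofReal p)
      (volume.restrict (Ioi 0)) :=
    (memLp_mul_exp_iff (f := fun x => |u x|) hp (continuous_abs.comp_aestronglyMeasurable hu)).2
      (by simpa only [abs_abs] using hui)
  have hb : MemLp (fun x => |v x| ^ (p - 1) * exp (ν * x / q)) (ENNReal.ofReal q)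
      (volume.restrict (Ioi 0)) :=
    (memLp_mul_exp_iff (f := fun x => |v x| ^ (p - 1)) hpq.symm.pos
      (hv.aemeasurable.abs.pow_const _).aestronglyMeasurable).2
      (by simpa only [abs_of_nonneg (rpow_nonneg (abs_nonneg _) _), hvq] using hvi)
  have hab : ∀ x, |u x| * exp (ν * x / p) * (|v x| ^ (p - 1) * exp (ν * x / q)) =
      |u x| * |v x| ^ (p - 1) * exp (ν * x) := fun x => by
    rw [mul_mul_mul_comm, ← exp_add, div_eq_mul_inv, div_eq_mul_inv, ← mul_add,
      hpq.inv_add_inv_eq_one, mul_one]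
  have := hpq.ennrealOfReal
  have hHolder := integral_mul_le_Lp_mul_Lq_of_nonneg hpq
    (ae_of_all _ fun y => by positivity) (ae_of_all _ fun y => by positivity) ha hb
  simp only [hab, mul_exp_div_rpow (abs_nonneg _) hp.ne',
    mul_exp_div_rpow (rpow_nonneg (abs_nonneg _) _) hpq.symm.pos.ne', hvq] at hHolder
  refine ⟨(ha.integrable_mul hb).congr (ae_of_all _ hab), hHolder.trans_eq ?_⟩
  rw [← lpNu_rpow hp.ne' v, ← rpow_mul (lpNu_nonneg v), mul_one_div, hpq.div_conj_eq_sub_one]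
  rfl

lemma mul_rpow_sub_one_of_nonneg {a : ℝ} (ha : 0 ≤ a) (hp : p ≠ 0) : a * a ^ (p - 1) = a ^ p := by
  rw [← rpow_one_add' ha (by simpa using hp), add_sub_cancel]

lemma mul_mul_abs_rpow_sub_two_le (hp : 1 < p) (d t : ℝ) :
    d * t * |t| ^ (p - 2) ≤ |d| * |t| ^ (p - 1) := by
  have h : |t| * |t| ^ (p - 2) = |t| ^ (p - 1) := by
    rw [show p - 2 = p - 1 - 1 by ring, mul_rpow_sub_one_of_nonneg (abs_nonneg t) (by linarith)]
  calc d * t * |t| ^ (p - 2) ≤ |d * t * |t| ^ (p - 2)| := le_abs_self _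
    _ = |d| * |t| ^ (p - 1) := by
      rw [abs_mul, abs_mul, abs_of_nonneg (rpow_nonneg (abs_nonneg t) _), mul_assoc, h]

lemma setIntegral_mul_abs_rpow_le_of_abs_le (hpq : p.HolderConjugate q) {D u v : ℝ → ℝ}
    {A B : ℝ} (hA : 0 ≤ A) (hB : 0 ≤ B)
    (hu : AEStronglyMeasurable u (volume.restrict (Ioi 0)))
    (hv : AEStronglyMeasurable v (volume.restrict (Ioi 0)))
    (hui : IntegrableOn (fun x => |u x| ^ p * exp (ν * x)) (Ioi 0))
    (hvi : IntegrableOn (fun x => |v x| ^ p * exp (ν * x)) (Ioi 0))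
    (hD : ∀ᵐ x ∂volume.restrict (Ioi 0), |D x| ≤ A * |v x| + B * |u x|) :
    ∫ x in Ioi 0, D x * v x * |v x| ^ (p - 2) * exp (ν * x) ≤
      A * lpNu ν p v ^ p + B * (lpNu ν p u * lpNu ν p v ^ (p - 1)) := by
  obtain ⟨hI, hHolder⟩ := integral_abs_mul_abs_rpow_mul_exp_le hpq hu hv hui hvi
  have hbound_int : IntegrableOn (fun x => A * (|v x| ^ p * exp (ν * x)) +
      B * (|u x| * |v x| ^ (p - 1) * exp (ν * x))) (Ioi 0) :=
    (hvi.const_mul A).add (hI.const_mul B)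
  have hle : ∀ᵐ x ∂volume.restrict (Ioi 0), D x * v x * |v x| ^ (p - 2) * exp (ν * x) ≤
      A * (|v x| ^ p * exp (ν * x)) + B * (|u x| * |v x| ^ (p - 1) * exp (ν * x)) := by
    filter_upwards [hD] with x hx
    calc D x * v x * |v x| ^ (p - 2) * exp (ν * x)
        ≤ |D x| * |v x| ^ (p - 1) * exp (ν * x) := by
          exact mul_le_mul_of_nonneg_right (mul_mul_abs_rpow_sub_two_le hpq.lt (D x) (v x))
            (exp_nonneg _)
      _ ≤ (A * |v x| + B * |u x|) * |v x| ^ (p - 1) * exp (ν * x) := by gcongr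
      _ = A * (|v x| ^ p * exp (ν * x)) + B * (|u x| * |v x| ^ (p - 1) * exp (ν * x)) := by
          rw [← mul_rpow_sub_one_of_nonneg (abs_nonneg (v x)) hpq.pos.ne']; ring
  have hRHS : 0 ≤ A * lpNu ν p v ^ p + B * (lpNu ν p u * lpNu ν p v ^ (p - 1)) := by
    have := lpNu_nonneg (ν := ν) (p := p) u
    have := lpNu_nonneg (ν := ν) (p := p) v
    positivity
  by_cases hint : IntegrableOn (fun x => D x * v x * |v x| ^ (p - 2) * exp (ν * x)) (Ioi 0)
  · refine (integral_mono_ae hint hbound_int hle).trans ?_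
    rw [integral_add (hvi.const_mul A) (hI.const_mul B), integral_const_mul, integral_const_mul,
      ← lpNu_rpow hpq.pos.ne']
    gcongr
  · rw [integral_undef hint]
    exact hRHS

end Weighted

section Drift

variable {H : Type*} [NormedAddCommGroup H] {g : ℝ → ℝ → H} {gbar : ℝ → ℝ}

lemma integrableOn_Ioc_comp (hgm : StronglyMeasurable fun z : ℝ × ℝ => g z.1 z.2)
    (hb : ∀ x u : ℝ, 0 ≤ x → ‖g x u‖ ≤ |gbar x|) {f : ℝ → ℝ} (hf : Measurable f) {x : ℝ}
    (hgbar : IntegrableOn (fun y => |gbar y|) (Ioc 0 x)) :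
    IntegrableOn (fun y => g y (f y)) (Ioc 0 x) :=
  hgbar.mono' (hgm.comp_measurable (measurable_id.prodMk hf)).aestronglyMeasurable
    ((ae_restrict_mem measurableSet_Ioc).mono fun y hy => hb y (f y) hy.1.le)

lemma norm_setIntegral_Ioc_comp_le [NormedSpace ℝ H] (hb : ∀ x u : ℝ, 0 ≤ x → ‖g x u‖ ≤ |gbar x|)
    (f : ℝ → ℝ) {x : ℝ} (hgbar : IntegrableOn (fun y => |gbar y|) (Ioc 0 x)) :
    ‖∫ y in Ioc 0 x, g y (f y)‖ ≤ ∫ y in Ioc 0 x, |gbar y| :=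
  norm_integral_le_of_norm_le hgbar
    ((ae_restrict_mem measurableSet_Ioc).mono fun y hy => hb y (f y) hy.1.le)

lemma norm_setIntegral_Ioc_comp_sub_le [NormedSpace ℝ H]
    (hgm : StronglyMeasurable fun z : ℝ × ℝ => g z.1 z.2)
    (hb : ∀ x u : ℝ, 0 ≤ x → ‖g x u‖ ≤ |gbar x|) {ghat : ℝ → ℝ}
    (hlip : ∀ x u v : ℝ, 0 ≤ x → ‖g x u - g x v‖ ≤ |ghat x| * |u - v|)
    {f₁ f₂ : ℝ → ℝ} (hf₁ : Measurable f₁) (hf₂ : Measurable f₂) {x M : ℝ}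
    (hM : ∀ᵐ y ∂volume.restrict (Ioc 0 x), |ghat y| ≤ M)
    (hgbar : IntegrableOn (fun y => |gbar y|) (Ioc 0 x))
    (hδ : IntegrableOn (fun y => |f₁ y - f₂ y|) (Ioc 0 x)) :
    ‖(∫ y in Ioc 0 x, g y (f₁ y)) - ∫ y in Ioc 0 x, g y (f₂ y)‖ ≤
      M * ∫ y in Ioc 0 x, |f₁ y - f₂ y| := by
  rw [← integral_sub (integrableOn_Ioc_comp hgm hb hf₁ hgbar)
    (integrableOn_Ioc_comp hgm hb hf₂ hgbar), ← integral_const_mul]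
  refine norm_integral_le_of_norm_le (hδ.const_mul M) ?_
  filter_upwards [ae_restrict_mem measurableSet_Ioc, hM] with y hy hMy
  exact (hlip y (f₁ y) (f₂ y) hy.1.le).trans (by gcongr)

lemma abs_hjmDrift₀_sub_le [InnerProductSpace ℝ H] (f₁ f₂ : ℝ → ℝ) (x : ℝ) :
    |hjmDrift₀ g f₁ x - hjmDrift₀ g f₂ x| ≤
      ‖g x (f₁ x) - g x (f₂ x)‖ * ‖∫ y in Ioc 0 x, g y (f₁ y)‖ +
        ‖g x (f₂ x)‖ * ‖(∫ y in Ioc 0 x, g y (f₁ y)) - ∫ y in Ioc 0 x, g y (f₂ y)‖ := by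
  have hsplit : hjmDrift₀ g f₁ x - hjmDrift₀ g f₂ x =
      inner ℝ (g x (f₁ x) - g x (f₂ x)) (∫ y in Ioc 0 x, g y (f₁ y)) +
        inner ℝ (g x (f₂ x)) ((∫ y in Ioc 0 x, g y (f₁ y)) - ∫ y in Ioc 0 x, g y (f₂ y)) := by
    simp only [hjmDrift₀, inner_sub_left, inner_sub_right]
    ring
  rw [hsplit]
  exact (abs_add_le _ _).trans
    (add_le_add (abs_real_inner_le_norm _ _) (abs_real_inner_le_norm _ _))

lemma ae_abs_hjmDrift₀_sub_le [InnerProductSpace ℝ H] {ν p q : ℝ} (hν : 0 < ν)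
    (hpq : p.HolderConjugate q) (hgm : StronglyMeasurable fun z : ℝ × ℝ => g z.1 z.2)
    (hb : ∀ x u : ℝ, 0 ≤ x → ‖g x u‖ ≤ |gbar x|) {ghat : ℝ → ℝ}
    (hlip : ∀ x u v : ℝ, 0 ≤ x → ‖g x u - g x v‖ ≤ |ghat x| * |u - v|)
    (hgbarm : Measurable gbar) (hgbar : IntegrableOn (fun x => |gbar x| ^ p * exp (ν * x)) (Ioi 0))
    {f₁ f₂ : ℝ → ℝ} (hf₁ : Measurable f₁) (hf₂ : Measurable f₂)
    (hδ : IntegrableOn (fun x => |f₁ x - f₂ x| ^ p * exp (ν * x)) (Ioi 0)) {M : ℝ} (hM0 : 0 ≤ M)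
    (hM : ∀ᵐ x ∂volume.restrict (Ioi 0), |ghat x| ≤ M) :
    ∀ᵐ x ∂volume.restrict (Ioi 0), |hjmDrift₀ g f₁ x - hjmDrift₀ g f₂ x| ≤
      M * (p / (ν * q)) ^ (1 / q) * lpNu ν p gbar * |f₁ x - f₂ x| +
        M * (p / (ν * q)) ^ (1 / q) * lpNu ν p (fun x => f₁ x - f₂ x) * |gbar x| := by
  have hgbarI := integral_Ioc_abs_le_lpNu hν hpq hgbarm.aestronglyMeasurable hgbar
  have hδI := integral_Ioc_abs_le_lpNu hν hpq (hf₁.sub hf₂).aestronglyMeasurable hδ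
  filter_upwards [ae_restrict_mem measurableSet_Ioi, hM] with x hx hMx
  have hMI := ae_mono (Measure.restrict_mono (Ioc_subset_Ioi_self : Ioc 0 x ⊆ Ioi 0) le_rfl) hM
  calc _ ≤ _ := abs_hjmDrift₀_sub_le f₁ f₂ x
    _ ≤ (M * |f₁ x - f₂ x|) * ((p / (ν * q)) ^ (1 / q) * lpNu ν p gbar) +
        |gbar x| * (M * ((p / (ν * q)) ^ (1 / q) * lpNu ν p (fun x => f₁ x - f₂ x))) := by
      gcongr
      · exact (hlip x _ _ hx.le).trans (by gcongr)
      · exact (norm_setIntegral_Ioc_comp_le hb f₁ (hgbarI x).1).trans (hgbarI x).2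
      · exact hb x _ hx.le
      · exact (norm_setIntegral_Ioc_comp_sub_le hgm hb hlip hf₁ hf₂ hMI (hgbarI x).1
          (hδI x).1).trans (by gcongr; exact (hδI x).2)
    _ = _ := by ring

end Drift

theorem stmt_15_general {H : Type*} [NormedAddCommGroup H] [InnerProductSpace ℝ H]
    (ν p q : ℝ) (hν : 0 < ν) (hp : 2 ≤ p) (hpq : 1 / p + 1 / q = 1)
    (g : ℝ → ℝ → H)
    (hgm : StronglyMeasurable fun z : ℝ × ℝ => g z.1 z.2)
    (gbar ghat : ℝ → ℝ) (hgbarm : Measurable gbar)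
    (hgbar : IntegrableOn (fun x => |gbar x| ^ p * Real.exp (ν * x)) (Ioi 0))
    (hghatInf : eLpNormEssSup ghat (volume.restrict (Ioi 0)) ≠ ⊤)
    (hb : ∀ x u : ℝ, 0 ≤ x → ‖g x u‖ ≤ |gbar x|)
    (hlip : ∀ x u v : ℝ, 0 ≤ x → ‖g x u - g x v‖ ≤ |ghat x| * |u - v|)
    (f₁ f₂ : ℝ → ℝ) (hf₁m : Measurable f₁) (hf₂m : Measurable f₂)
    (hf₁ : IntegrableOn (fun x => |f₁ x| ^ p * Real.exp (ν * x)) (Ioi 0))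
    (hf₂ : IntegrableOn (fun x => |f₂ x| ^ p * Real.exp (ν * x)) (Ioi 0)) :
    (∫ x in Ioi (0 : ℝ),
        (hjmDrift₀ g f₁ x - hjmDrift₀ g f₂ x) * (f₁ x - f₂ x) *
          |f₁ x - f₂ x| ^ (p - 2) * Real.exp (ν * x)) ≤
      2 * (p / (ν * q)) ^ (1 / q) *
        (eLpNormEssSup ghat (volume.restrict (Ioi 0))).toReal *
        lpNu ν p gbar * lpNu ν p (fun x => f₁ x - f₂ x) ^ p := by
  have hpq' : p.HolderConjugate q :=
    holderConjugate_iff.mpr ⟨by linarith, by simpa only [one_div] using hpq⟩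
  set C := (p / (ν * q)) ^ (1 / q)
  set M := (eLpNormEssSup ghat (volume.restrict (Ioi 0))).toReal
  set δ := fun x => f₁ x - f₂ x
  have hδ := IntegrableOn.abs_sub_rpow_mul_exp hpq'.pos hf₁m.aestronglyMeasurable
    hf₂m.aestronglyMeasurable hf₁ hf₂
  have hD := ae_abs_hjmDrift₀_sub_le hν hpq' hgm hb hlip hgbarm hgbar hf₁m hf₂m hδ
    ENNReal.toReal_nonneg (ae_abs_le_eLpNormEssSup_toReal hghatInf)
  have : 0 ≤ M * C := by have := hpq'.symm.pos; positivity
  have := lpNu_nonneg (ν := ν) (p := p) gbar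
  have := lpNu_nonneg (ν := ν) (p := p) δ
  calc _ ≤ M * C * lpNu ν p gbar * lpNu ν p δ ^ p +
        M * C * lpNu ν p δ * (lpNu ν p gbar * lpNu ν p δ ^ (p - 1)) :=
        setIntegral_mul_abs_rpow_le_of_abs_le hpq' (by positivity) (by positivity)
          hgbarm.aestronglyMeasurable (hf₁m.sub hf₂m).aestronglyMeasurable hgbar hδ hD
    _ = _ := by
      rw [← mul_rpow_sub_one_of_nonneg (lpNu_nonneg δ) hpq'.pos.ne']
      ring

/-- For time-independent `g` with `‖g(x,u)‖_H ≤ |ḡ(x)|` and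
`‖g(x,u) − g(x,v)‖_H ≤ |ĝ(x)| |u−v|` (`ḡ ∈ L^p_ν`, `ĝ ∈ L^p_ν ∩ L^∞`), the semi-inner
product estimate holds for all measurable `f₁, f₂ ∈ L^p_ν`:
`∫_0^∞ (F(f₁)(x) − F(f₂)(x))(f₁(x) − f₂(x))|f₁(x) − f₂(x)|^{p−2} e^{νx} dx
  ≤ 2 (p/(νq))^{1/q} ‖ĝ‖_{L^∞} ‖ḡ‖_{ν,p} ‖f₁ − f₂‖^p_{ν,p}`. -/
theorem stmt_15 {H : Type*} [NormedAddCommGroup H] [InnerProductSpace ℝ H]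
    [CompleteSpace H] [TopologicalSpace.SeparableSpace H]
    (ν p q : ℝ) (hν : 0 < ν) (hp : 2 ≤ p) (hpq : 1 / p + 1 / q = 1)
    (g : ℝ → ℝ → H)
    (hgm : StronglyMeasurable fun z : ℝ × ℝ => g z.1 z.2)
    (gbar ghat : ℝ → ℝ) (hgbarm : Measurable gbar) (hghatm : Measurable ghat)
    (hgbar : IntegrableOn (fun x => |gbar x| ^ p * Real.exp (ν * x)) (Ioi 0))
    (hghat : IntegrableOn (fun x => |ghat x| ^ p * Real.exp (ν * x)) (Ioi 0))
    (hghatInf : eLpNormEssSup ghat (volume.restrict (Ioi 0)) ≠ ⊤)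
    (hb : ∀ x u : ℝ, 0 ≤ x → ‖g x u‖ ≤ |gbar x|)
    (hlip : ∀ x u v : ℝ, 0 ≤ x → ‖g x u - g x v‖ ≤ |ghat x| * |u - v|)
    (f₁ f₂ : ℝ → ℝ) (hf₁m : Measurable f₁) (hf₂m : Measurable f₂)
    (hf₁ : IntegrableOn (fun x => |f₁ x| ^ p * Real.exp (ν * x)) (Ioi 0))
    (hf₂ : IntegrableOn (fun x => |f₂ x| ^ p * Real.exp (ν * x)) (Ioi 0)) :
    (∫ x in Ioi (0 : ℝ),
        (hjmDrift₀ g f₁ x - hjmDrift₀ g f₂ x) * (f₁ x - f₂ x) *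
          |f₁ x - f₂ x| ^ (p - 2) * Real.exp (ν * x)) ≤
      2 * (p / (ν * q)) ^ (1 / q) *
        (eLpNormEssSup ghat (volume.restrict (Ioi 0))).toReal *
        lpNu ν p gbar * lpNu ν p (fun x => f₁ x - f₂ x) ^ p :=
  stmt_15_general ν p q hν hp hpq g hgm gbar ghat hgbarm hgbar hghatInf hb hlip f₁ f₂ hf₁m hf₂m hf₁
    hf₂
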